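/- For every positive integer k and every x > 0, the double inequality (k−1)!/x^k + k!/(2x^{k+1}) < (−1)^{k+1} ψ^{(k)}(x) < (k−1)!/x^k + k!/x^{k+1} holds. -/

import Mathlib

/-
The functional equation ψ(x+1) = ψ(x) + 1/x and the convexity of log Γ, which squeezes ψ(x+1)
between log x and log (x+1), give ψ(x) - ψ(1) = ∑ₙ (1/(1+n) - 1/(x+n)). Differentiating termwise,
(-1)^(k+1) ψ^(k)(x) = k! ζ(k+1, x) with ζ(s, x) = ∑ₙ 1/(x+n)^s. Now 1/x^k telescopes as
∑ₙ (1/(x+n)^k - 1/(x+n+1)^k), and each term is the integral of the decreasing convex function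
k t^(-k-1) over [x+n, x+n+1], hence lies strictly between its right-endpoint value
k/(x+n+1)^(k+1) and its trapezoid value (k/2)(1/(x+n)^(k+1) + 1/(x+n+1)^(k+1)). Summing over n
gives k (ζ(k+1, x) - 1/x^(k+1)) < 1/x^k < k (ζ(k+1, x) - 1/(2 x^(k+1))).
-/

noncomputable def psi : ℝ → ℝ := deriv (fun x => Real.log (Real.Gamma x))

open Real Filter Topology Set

lemma pow_mul_add_lt_add_one_pow {a : ℝ} (ha : 0 < a) {k : ℕ} (hk : 1 ≤ k) :
    a ^ k * (a + k + 1) < (a + 1) ^ (k + 1) := by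
  obtain ⟨m, rfl⟩ := Nat.exists_eq_add_of_le' hk
  have hbern := pow_add_mul_le_add_pow ha.le (by linarith : 0 ≤ 2 * a + 1) (m + 1)
  rw [Nat.add_sub_cancel, mul_one] at hbern
  have hgap : (a + 1) * (a ^ (m + 1) + ↑(m + 1) * a ^ m) - a ^ (m + 1) * (a + ↑(m + 1) + 1)
      = (m + 1) * a ^ m := by push_cast; ring
  calc a ^ (m + 1) * (a + ↑(m + 1) + 1)
      < (a + 1) * (a ^ (m + 1) + ↑(m + 1) * a ^ m) := by
        have : 0 < (m + 1) * a ^ m := by positivity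
        linarith
    _ ≤ (a + 1) * (a + 1) ^ (m + 1) := by gcongr
    _ = (a + 1) ^ (m + 1 + 1) := by ring

lemma two_mul_mul_add_one_pow_sub_pow_lt {a : ℝ} (ha : 0 < a) {k : ℕ} (hk : 1 ≤ k) :
    2 * a * (a + 1) * ((a + 1) ^ k - a ^ k) < k * ((a + 1) ^ (k + 1) + a ^ (k + 1)) := by
  induction k, hk using Nat.le_induction with
  | base => push_cast; nlinarith
  | succ k hk ih =>
    have hbern : a ^ (k + 1) * (a + ↑(k + 1) + 1) < (a + 1) ^ (k + 1 + 1) :=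
      pow_mul_add_lt_add_one_pow ha (by omega)
    -- the defect at `k + 1` is `a + 1` times the defect at `k` plus a Bernoulli gap
    have hrec : ((k + 1 : ℕ) : ℝ) * ((a + 1) ^ (k + 1 + 1) + a ^ (k + 1 + 1))
          - 2 * a * (a + 1) * ((a + 1) ^ (k + 1) - a ^ (k + 1))
        = (a + 1) * (k * ((a + 1) ^ (k + 1) + a ^ (k + 1))
            - 2 * a * (a + 1) * ((a + 1) ^ k - a ^ k))
          + ((a + 1) ^ (k + 1 + 1) - a ^ (k + 1) * (a + ↑(k + 1) + 1)) := by
      push_cast; ring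
    have : 0 < (a + 1) * (k * ((a + 1) ^ (k + 1) + a ^ (k + 1))
        - 2 * a * (a + 1) * ((a + 1) ^ k - a ^ k)) := mul_pos (by linarith) (by linarith)
    linarith

lemma lt_one_div_pow_sub_one_div_add_one_pow {a : ℝ} (ha : 0 < a) {k : ℕ} (hk : 1 ≤ k) :
    k * (1 / (a + 1) ^ (k + 1)) < 1 / a ^ k - 1 / (a + 1) ^ k := by
  have hbern := mul_lt_mul_of_pos_right (pow_mul_add_lt_add_one_pow ha hk)
    (pow_pos (by linarith : 0 < a + 1) k)
  rw [div_sub_div _ _ (by positivity) (by positivity), mul_one_div,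
    div_lt_div_iff₀ (by positivity) (by positivity)]
  linear_combination hbern

lemma one_div_pow_sub_one_div_add_one_pow_lt {a : ℝ} (ha : 0 < a) {k : ℕ} (hk : 1 ≤ k) :
    1 / a ^ k - 1 / (a + 1) ^ k < k / 2 * (1 / a ^ (k + 1) + 1 / (a + 1) ^ (k + 1)) := by
  have htrap := mul_lt_mul_of_pos_right (two_mul_mul_add_one_pow_sub_pow_lt ha hk)
    (mul_pos (pow_pos ha k) (pow_pos (by linarith : 0 < a + 1) k))
  rw [div_sub_div _ _ (by positivity) (by positivity),
    div_add_div _ _ (by positivity) (by positivity),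
    div_mul_div_comm, div_lt_div_iff₀ (by positivity) (by positivity)]
  linear_combination htrap

lemma hasSum_sub_succ_of_antitone {f : ℕ → ℝ} (hf : Antitone f)
    (h : Tendsto f atTop (𝓝 0)) : HasSum (fun n => f n - f (n + 1)) (f 0) := by
  rw [hasSum_iff_tendsto_nat_of_nonneg (fun n => sub_nonneg.2 (hf n.le_succ))]
  simp_rw [Finset.sum_range_sub']
  simpa using tendsto_const_nhds.sub h

noncomputable def hurwitzSeries (s : ℕ) (x : ℝ) : ℝ := ∑' n : ℕ, 1 / (x + n) ^ s

lemma summable_one_div_add_pow {s : ℕ} (hs : 2 ≤ s) {x : ℝ} (hx : 0 < x) :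
    Summable fun n : ℕ => 1 / (x + n) ^ s := by
  have h := (Real.summable_one_div_nat_add_rpow x s).2 (by exact_mod_cast hs)
  refine h.congr fun n => ?_
  rw [abs_of_pos (by positivity), Real.rpow_natCast, add_comm]

lemma hasSum_hurwitzSeries {s : ℕ} (hs : 2 ≤ s) {x : ℝ} (hx : 0 < x) :
    HasSum (fun n : ℕ => 1 / (x + n) ^ s) (hurwitzSeries s x) :=
  (summable_one_div_add_pow hs hx).hasSum

lemma hasSum_hurwitzSeries_sub {s : ℕ} (hs : 2 ≤ s) {x : ℝ} (hx : 0 < x) :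
    HasSum (fun n : ℕ => 1 / (x + n + 1) ^ s) (hurwitzSeries s x - 1 / x ^ s) := by
  simpa [add_assoc] using (hasSum_nat_add_iff' 1).2 (hasSum_hurwitzSeries hs hx)

lemma hasSum_one_div_pow_sub_one_div_add_one_pow {k : ℕ} (hk : 1 ≤ k) {x : ℝ} (hx : 0 < x) :
    HasSum (fun n : ℕ => 1 / (x + n) ^ k - 1 / (x + n + 1) ^ k) (1 / x ^ k) := by
  have hanti : Antitone fun n : ℕ => 1 / (x + n) ^ k := fun m n hmn => by
    have : (m : ℝ) ≤ n := by exact_mod_cast hmn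
    exact one_div_le_one_div_of_le (by positivity)
      (pow_le_pow_left₀ (by positivity) (by linarith) k)
  have hlim : Tendsto (fun n : ℕ => 1 / (x + n) ^ k) atTop (𝓝 0) := by
    simp_rw [one_div]
    exact ((tendsto_pow_atTop (by omega)).comp
      (tendsto_atTop_add_const_left _ x tendsto_natCast_atTop_atTop)).inv_tendsto_atTop
  simpa [add_assoc] using hasSum_sub_succ_of_antitone hanti hlim

lemma hurwitzSeries_lt {k : ℕ} (hk : 1 ≤ k) {x : ℝ} (hx : 0 < x) :
    hurwitzSeries (k + 1) x < 1 / (k * x ^ k) + 1 / x ^ (k + 1) := by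
  have hterm (n : ℕ) : k * (1 / (x + n + 1) ^ (k + 1)) < 1 / (x + n) ^ k - 1 / (x + n + 1) ^ k :=
    lt_one_div_pow_sub_one_div_add_one_pow (by positivity) hk
  have h := hasSum_lt (fun n => (hterm n).le) (hterm 0)
    ((hasSum_hurwitzSeries_sub (s := k + 1) (by omega) hx).mul_left (k : ℝ))
    (hasSum_one_div_pow_sub_one_div_add_one_pow hk hx)
  rw [mul_comm (k : ℝ), ← div_div, ← sub_lt_iff_lt_add, lt_div_iff₀' (by positivity)]
  exact h

lemma lt_hurwitzSeries {k : ℕ} (hk : 1 ≤ k) {x : ℝ} (hx : 0 < x) :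
    1 / (k * x ^ k) + 1 / (2 * x ^ (k + 1)) < hurwitzSeries (k + 1) x := by
  have hterm (n : ℕ) : 1 / (x + n) ^ k - 1 / (x + n + 1) ^ k
      < k / 2 * (1 / (x + n) ^ (k + 1) + 1 / (x + n + 1) ^ (k + 1)) :=
    one_div_pow_sub_one_div_add_one_pow_lt (by positivity) hk
  have h := hasSum_lt (fun n => (hterm n).le) (hterm 0)
    (hasSum_one_div_pow_sub_one_div_add_one_pow hk hx)
    (((hasSum_hurwitzSeries (s := k + 1) (by omega) hx).add
      (hasSum_hurwitzSeries_sub (by omega) hx)).mul_left ((k : ℝ) / 2))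
  rw [mul_comm (k : ℝ), ← div_div, ← lt_sub_iff_add_lt, div_lt_iff₀' (by positivity)]
  linear_combination h

lemma logGamma_add_one {y : ℝ} (hy : 0 < y) :
    log (Gamma (y + 1)) = log (Gamma y) + log y := by
  rw [Gamma_add_one hy.ne', log_mul hy.ne' (Gamma_pos_of_pos hy).ne', add_comm]

lemma differentiableAt_logGamma {x : ℝ} (hx : 0 < x) :
    DifferentiableAt ℝ (fun y => log (Gamma y)) x := by
  have hx' : ∀ m : ℕ, x ≠ -m := fun m => by linarith [(m.cast_nonneg : (0 : ℝ) ≤ m)]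
  exact (differentiableAt_Gamma hx').log (Gamma_ne_zero hx')

lemma psi_add_one {x : ℝ} (hx : 0 < x) : psi (x + 1) = psi x + 1 / x := by
  rw [psi, ← deriv_comp_add_const, one_div, ← deriv_log,
    ← deriv_add (differentiableAt_logGamma hx) (differentiableAt_log hx.ne')]
  refine EventuallyEq.deriv_eq ?_
  filter_upwards [eventually_gt_nhds hx] with y hy using logGamma_add_one hy

lemma psi_add_nat {x : ℝ} (hx : 0 < x) (n : ℕ) :
    psi (x + n) = psi x + ∑ j ∈ Finset.range n, 1 / (x + j) := by
  induction n with
  | zero => simp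
  | succ n ih =>
    rw [Nat.cast_succ, ← add_assoc, psi_add_one (by positivity), ih, Finset.sum_range_succ,
      add_assoc]

lemma log_le_psi_add_one {x : ℝ} (hx : 0 < x) : log x ≤ psi (x + 1) := by
  have h := convexOn_log_Gamma.slope_le_deriv hx (by positivity : (0 : ℝ) < x + 1)
    (lt_add_one x) (differentiableAt_logGamma (by positivity))
  rwa [slope_def_field, add_sub_cancel_left, div_one, Function.comp_apply, Function.comp_apply,
    logGamma_add_one hx, add_sub_cancel_left] at h

lemma psi_add_one_le_log {x : ℝ} (hx : 0 < x) : psi (x + 1) ≤ log (x + 1) := by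
  have h := convexOn_log_Gamma.deriv_le_slope (by positivity : (0 : ℝ) < x + 1)
    (by positivity : (0 : ℝ) < x + 1 + 1) (lt_add_one _) (differentiableAt_logGamma (by positivity))
  rwa [slope_def_field, add_sub_cancel_left, div_one, Function.comp_apply, Function.comp_apply,
    logGamma_add_one (by positivity), add_sub_cancel_left] at h

lemma tendsto_psi_add_nat_sub_log {x : ℝ} (hx : 0 < x) :
    Tendsto (fun n : ℕ => psi (x + n) - log n) atTop (𝓝 0) := by
  have hlog (c : ℝ) : Tendsto (fun n : ℕ => log (n + c) - log n) atTop (𝓝 0) :=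
    (tendsto_log_comp_add_sub_log c).comp tendsto_natCast_atTop_atTop
  refine tendsto_of_tendsto_of_tendsto_of_le_of_le' (hlog (x - 1)) (hlog x) ?_ ?_ <;>
    filter_upwards [eventually_ge_atTop 1] with n hn <;>
    have hn' : (1 : ℝ) ≤ n := by exact_mod_cast hn
  · have := log_le_psi_add_one (by linarith : 0 < n + (x - 1))
    rw [show n + (x - 1) + 1 = x + n by ring] at this
    linarith
  · have := psi_add_one_le_log (by linarith : 0 < n + (x - 1))
    rw [show n + (x - 1) + 1 = n + x by ring] at this
    rw [add_comm x]
    linarith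

lemma summable_one_div_one_add_sub_one_div_add {x : ℝ} (hx : 0 < x) :
    Summable fun n : ℕ => 1 / (1 + n) - 1 / (x + n) := by
  set m := min x 1
  have hm : 0 < m := lt_min hx one_pos
  refine ((summable_one_div_add_pow le_rfl hm).mul_left |x - 1|).of_norm_bounded fun n => ?_
  have hmn : 0 < m + n := by positivity
  have hsq : (m + n) ^ 2 ≤ (1 + n) * (x + n) := by
    rw [sq]
    gcongr <;> simp [m]
  have hdiff : 1 / (1 + n) - 1 / (x + n) = (x - 1) / ((1 + n) * (x + n)) := by
    field_simp
    ring
  rw [hdiff, norm_div, Real.norm_eq_abs, Real.norm_of_nonneg (by positivity), mul_one_div]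
  gcongr

lemma hasSum_psi_sub_psi_one {x : ℝ} (hx : 0 < x) :
    HasSum (fun n : ℕ => 1 / (1 + n) - 1 / (x + n)) (psi x - psi 1) := by
  rw [(summable_one_div_one_add_sub_one_div_add hx).hasSum_iff_tendsto_nat]
  have hpartial (n : ℕ) : ∑ j ∈ Finset.range n, (1 / (1 + (j : ℝ)) - 1 / (x + j))
      = psi x - psi 1 + (psi (1 + n) - log n) - (psi (x + n) - log n) := by
    rw [Finset.sum_sub_distrib, psi_add_nat hx, psi_add_nat one_pos]
    ring
  simp_rw [hpartial]
  simpa using ((tendsto_psi_add_nat_sub_log one_pos).const_add (psi x - psi 1)).sub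
    (tendsto_psi_add_nat_sub_log hx)

lemma hasDerivAt_tsum_of_abs_le_div_add_pow {g g' : ℕ → ℝ → ℝ} {s : ℕ} (hs : 2 ≤ s) {C x : ℝ}
    (hx : 0 < x) (hg : ∀ n y, 0 < y → HasDerivAt (g n) (g' n y) y)
    (hg' : ∀ n y, 0 < y → |g' n y| ≤ C / (y + n) ^ s) (hsum : Summable fun n => g n x) :
    HasDerivAt (fun y => ∑' n, g n y) (∑' n, g' n x) x := by
  have hx2 : 0 < x / 2 := half_pos hx
  have hmem : x ∈ Ioi (x / 2) := half_lt_self hx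
  refine hasDerivAt_tsum_of_isPreconnected ((summable_one_div_add_pow hs hx2).mul_left |C|)
    isOpen_Ioi isPreconnected_Ioi (fun n y hy => hg n y (hx2.trans hy)) (fun n y hy => ?_)
    hmem hsum hmem
  have hy : x / 2 < y := hy
  calc ‖g' n y‖ ≤ C / (y + n) ^ s := hg' n y (hx2.trans hy)
    _ ≤ |C| / (x / 2 + n) ^ s := by gcongr; exact le_abs_self C
    _ = |C| * (1 / (x / 2 + n) ^ s) := (mul_one_div _ _).symm

lemma hasDerivAt_psi {x : ℝ} (hx : 0 < x) : HasDerivAt psi (hurwitzSeries 2 x) x := by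
  have hderiv := hasDerivAt_tsum_of_abs_le_div_add_pow
    (g := fun n y => 1 / (1 + n) - 1 / (y + n)) (g' := fun n y => 1 / (y + n) ^ 2)
    (C := 1) le_rfl hx (fun n y hy => ?_) (fun n y hy => ?_)
    (summable_one_div_one_add_sub_one_div_add hx)
  · refine (hderiv.add_const (psi 1)).congr_of_eventuallyEq ?_
    filter_upwards [eventually_gt_nhds hx] with y hy
    rw [(hasSum_psi_sub_psi_one hy).tsum_eq, sub_add_cancel]
  · have hyn : y + n ≠ 0 := by positivity
    simpa [one_div, neg_div] using
      (((hasDerivAt_id y).add_const (n : ℝ)).inv hyn).const_sub (1 / (1 + n : ℝ))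
  · rw [abs_of_pos (by positivity)]

lemma hasDerivAt_hurwitzSeries {s : ℕ} (hs : 2 ≤ s) {x : ℝ} (hx : 0 < x) :
    HasDerivAt (hurwitzSeries s) (-s * hurwitzSeries (s + 1) x) x := by
  have hderiv := hasDerivAt_tsum_of_abs_le_div_add_pow
    (g := fun n y => 1 / (y + n) ^ s) (g' := fun n y => -s * (1 / (y + n) ^ (s + 1)))
    (C := s) (s := s + 1) (by omega) hx (fun n y hy => ?_) (fun n y hy => ?_)
    (summable_one_div_add_pow hs hx)
  · rwa [tsum_mul_left] at hderiv
  · have hyn : y + n ≠ 0 := by positivity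
    simp only [one_div]
    refine ((((hasDerivAt_id y).add_const (n : ℝ)).fun_pow s).fun_inv
      (pow_ne_zero s hyn)).congr_deriv ?_
    obtain ⟨t, rfl⟩ := Nat.exists_eq_add_of_le' (by omega : 1 ≤ s)
    simp only [id, Nat.add_sub_cancel, mul_one]
    field_simp
    ring
  · rw [abs_mul, abs_neg, Nat.abs_cast, abs_of_pos (by positivity), mul_one_div]

lemma iteratedDeriv_psi_eqOn {k : ℕ} (hk : 1 ≤ k) :
    EqOn (iteratedDeriv k psi)
      (fun x => (-1) ^ (k + 1) * k.factorial * hurwitzSeries (k + 1) x) (Ioi 0) := by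
  induction k, hk using Nat.le_induction with
  | base =>
    intro x hx
    simp [iteratedDeriv_one, (hasDerivAt_psi hx).deriv]
  | succ k hk ih =>
    intro x hx
    rw [iteratedDeriv_succ, (ih.eventuallyEq_of_mem (isOpen_Ioi.mem_nhds hx)).deriv_eq,
      ((hasDerivAt_hurwitzSeries (by omega) hx).const_mul _).deriv, Nat.factorial_succ]
    push_cast
    ring

theorem polygamma_bounds (k : ℕ) (hk : 1 ≤ k) (x : ℝ) (hx : 0 < x) :
    ((k - 1).factorial : ℝ) / x ^ k + (k.factorial : ℝ) / (2 * x ^ (k + 1)) <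
      (-1 : ℝ) ^ (k + 1) * iteratedDeriv k psi x ∧
    (-1 : ℝ) ^ (k + 1) * iteratedDeriv k psi x <
      ((k - 1).factorial : ℝ) / x ^ k + (k.factorial : ℝ) / x ^ (k + 1) := by
  have hsign : (-1 : ℝ) ^ (k + 1) * iteratedDeriv k psi x
      = k.factorial * hurwitzSeries (k + 1) x := by
    rw [iteratedDeriv_psi_eqOn hk hx, ← mul_assoc, ← mul_assoc, ← pow_add,
      Even.neg_one_pow ⟨k + 1, rfl⟩, one_mul]
  have hfac : (k.factorial : ℝ) = k * (k - 1).factorial := by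
    exact_mod_cast (Nat.mul_factorial_pred (by omega)).symm
  rw [hsign]
  constructor
  · calc ((k - 1).factorial : ℝ) / x ^ k + k.factorial / (2 * x ^ (k + 1))
        = k.factorial * (1 / (k * x ^ k) + 1 / (2 * x ^ (k + 1))) := by
          rw [hfac]; field_simp
      _ < k.factorial * hurwitzSeries (k + 1) x := by
          gcongr; exact lt_hurwitzSeries hk hx
  · calc k.factorial * hurwitzSeries (k + 1) x
        < k.factorial * (1 / (k * x ^ k) + 1 / x ^ (k + 1)) := by
          gcongr; exact hurwitzSeries_lt hk hx
      _ = ((k - 1).factorial : ℝ) / x ^ k + k.factorial / x ^ (k + 1) := by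
          rw [hfac]; field_simp
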